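/- For 0 < t < 1 and n ≥ 1, I_{t/(1+t)}(n,n) ≤ (1/(2√(πn))) · ((1+t)/(1−t)) · (4t/(1+t)²)ⁿ. -/

import Mathlib

open MeasureTheory ProbabilityTheory Real
open scoped RealInnerProductSpace ENNReal NNReal

set_option maxHeartbeats 1000000

open Filter Nat in
lemma sqrt_pi_le_stirling (n : ℕ) (hn : 1 ≤ n) : Real.sqrt π ≤ Stirling.stirlingSeq n := by
  obtain ⟨m, rfl⟩ := Nat.exists_eq_add_of_le hn
  have ht : Tendsto (Stirling.stirlingSeq ∘ Nat.succ) atTop (nhds (Real.sqrt π)) :=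
    Stirling.tendsto_stirlingSeq_sqrt_pi.comp (tendsto_add_atTop_nat 1)
  simpa [Nat.add_comm] using Stirling.stirlingSeq'_antitone.le_of_tendsto ht m

open Filter Nat in
lemma stirling_id (n : ℕ) (hn : 1 ≤ n) :
    (Nat.centralBinom n : ℝ) * Real.sqrt n / 4 ^ n
      = Stirling.stirlingSeq (2 * n) / (Stirling.stirlingSeq n) ^ 2 := by
  have hn0 : (0:ℝ) < n := by exact_mod_cast hn
  have hC : (Nat.centralBinom n : ℝ) = (2*n)! / ((n)! * (n)!) := by
    have := Nat.cast_choose ℝ (show n ≤ 2*n by omega)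
    rw [Nat.centralBinom, this, show 2*n-n = n from by omega]
  have hf : (0:ℝ) < (n)! := by exact_mod_cast Nat.factorial_pos n
  have hA : (0:ℝ) < ((n:ℝ) / Real.exp 1) ^ n := by positivity
  have hs2 : (0:ℝ) < Real.sqrt (2*n) := Real.sqrt_pos.mpr (by positivity)
  unfold Stirling.stirlingSeq
  rw [hC]
  push_cast
  have h4 : Real.sqrt (2 * (2*(n:ℝ))) = 2 * Real.sqrt n := by
    rw [show (2 * (2*(n:ℝ))) = 4 * n by ring, Real.sqrt_mul (by norm_num),
      show Real.sqrt 4 = 2 by rw [show (4:ℝ) = 2^2 by norm_num, Real.sqrt_sq (by norm_num)]]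
  have hpow : ((2*(n:ℝ)) / Real.exp 1) ^ (2*n) = 4^n * (((n:ℝ)/Real.exp 1)^n)^2 := by
    rw [show (2*(n:ℝ))/Real.exp 1 = 2 * ((n:ℝ)/Real.exp 1) by ring, mul_pow, ← pow_mul, pow_mul 2]
    norm_num
    ring
  rw [h4, hpow]
  have hsn : (0:ℝ) < Real.sqrt n := Real.sqrt_pos.mpr hn0
  have hs2' : (0:ℝ) < Real.sqrt 2 := by positivity
  have : Real.sqrt n * Real.sqrt n = (n:ℝ) := Real.mul_self_sqrt hn0.le
  field_simp
  ring_nf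
  rw [Real.sq_sqrt hn0.le, Real.sq_sqrt (by positivity : (0:ℝ) ≤ (n:ℝ)*2)]

open Filter Nat in
lemma cb_bound (n : ℕ) (hn : 1 ≤ n) :
    (Nat.centralBinom n : ℝ) * Real.sqrt (π * n) ≤ 4 ^ n := by
  have h1 := sqrt_pi_le_stirling n hn
  have h3 : Stirling.stirlingSeq (2*n) ≤ Stirling.stirlingSeq n := by
    obtain ⟨m, rfl⟩ := Nat.exists_eq_add_of_le hn
    have := Stirling.stirlingSeq'_antitone (show m ≤ 2*(1+m) - 1 by omega)
    simpa [Function.comp, show (2*(1+m)) - 1 + 1 = 2*(1+m) by omega, Nat.add_comm 1 m,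
      show 2*(m+1) - 1 + 1 = 2*(m+1) by omega]
      using this
  have hπ : (0:ℝ) < Real.sqrt π := Real.sqrt_pos.mpr Real.pi_pos
  have hsn : (0:ℝ) < Stirling.stirlingSeq n := lt_of_lt_of_le hπ h1
  have hid := stirling_id n hn
  have key : Stirling.stirlingSeq (2*n) / (Stirling.stirlingSeq n)^2 ≤ 1 / Real.sqrt π := by
    calc Stirling.stirlingSeq (2*n) / (Stirling.stirlingSeq n)^2
        ≤ Stirling.stirlingSeq n / (Stirling.stirlingSeq n)^2 := by
          exact div_le_div_of_nonneg_right h3 (by positivity)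
      _ = 1 / Stirling.stirlingSeq n := by field_simp
      _ ≤ 1 / Real.sqrt π := by
          apply one_div_le_one_div_of_le hπ h1
  have h4 : (0:ℝ) < 4 ^ n := by positivity
  have : (Nat.centralBinom n : ℝ) * Real.sqrt n ≤ 4 ^ n / Real.sqrt π := by
    rw [← hid] at key
    rw [div_le_div_iff₀ h4 hπ] at key
    rw [le_div_iff₀ hπ]
    linarith [key]
  calc (Nat.centralBinom n : ℝ) * Real.sqrt (π * n)
      = (Nat.centralBinom n : ℝ) * Real.sqrt n * Real.sqrt π := by
        rw [Real.sqrt_mul Real.pi_pos.le]; ring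
    _ ≤ (4 ^ n / Real.sqrt π) * Real.sqrt π := by
        exact mul_le_mul_of_nonneg_right this hπ.le
    _ = 4 ^ n := by field_simp

lemma integral_bound (n : ℕ) (hn : 1 ≤ n) (z : ℝ) (hz0 : 0 < z) (hz : z < 1/2) :
    ∫ x in (0:ℝ)..z, x^(n-1) * (1-x)^(n-1) ≤ (z*(1-z))^n / (n * (1-2*z)) := by
  have h2z : 0 < 1 - 2*z := by linarith
  have hnR : (0:ℝ) < n := by exact_mod_cast hn
  have hderiv : ∀ x ∈ Set.uIcc (0:ℝ) z,
      HasDerivAt (fun y : ℝ => (y*(1-y))^n / (n:ℝ)) ((x*(1-x))^(n-1) * (1-2*x)) x := by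
    intro x _
    have h1 : HasDerivAt (fun y : ℝ => y*(1-y)) (1-2*x) x := by
      have := (hasDerivAt_id x).mul ((hasDerivAt_const x (1:ℝ)).sub (hasDerivAt_id x))
      refine this.congr_deriv ?_
      simp only [Pi.sub_apply, id_eq]
      ring
    have h2 := (h1.pow n).div_const (n:ℝ)
    refine h2.congr_deriv ?_
    field_simp
  have hcont : Continuous fun x : ℝ => (x*(1-x))^(n-1) * (1-2*x) := by continuity
  have hexact : ∫ x in (0:ℝ)..z, (x*(1-x))^(n-1) * (1-2*x) = (z*(1-z))^n / n := by
    rw [intervalIntegral.integral_eq_sub_of_hasDerivAt hderiv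
      (hcont.intervalIntegrable 0 z)]
    simp [zero_pow (by omega : n ≠ 0)]
  have hmono : ∫ x in (0:ℝ)..z, x^(n-1) * (1-x)^(n-1)
      ≤ ∫ x in (0:ℝ)..z, (x*(1-x))^(n-1) * (1-2*x) / (1-2*z) := by
    apply intervalIntegral.integral_mono_on hz0.le
    · exact (Continuous.intervalIntegrable (by continuity) 0 z)
    · exact ((hcont.div_const _).intervalIntegrable 0 z)
    · intro x hx
      obtain ⟨hx0, hxz⟩ := hx
      have hx1 : 0 < 1 - x := by linarith
      have hfnn : (0:ℝ) ≤ (x*(1-x))^(n-1) := by positivity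
      have h1 : (1:ℝ) ≤ (1-2*x)/(1-2*z) := by
        rw [le_div_iff₀ h2z]; linarith
      calc x^(n-1) * (1-x)^(n-1) = (x*(1-x))^(n-1) * 1 := by rw [mul_pow]; ring
        _ ≤ (x*(1-x))^(n-1) * ((1-2*x)/(1-2*z)) := by
            exact mul_le_mul_of_nonneg_left h1 hfnn
        _ = (x*(1-x))^(n-1) * (1-2*x) / (1-2*z) := by ring
  calc ∫ x in (0:ℝ)..z, x^(n-1) * (1-x)^(n-1)
      ≤ ∫ x in (0:ℝ)..z, (x*(1-x))^(n-1) * (1-2*x) / (1-2*z) := hmono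
    _ = (∫ x in (0:ℝ)..z, (x*(1-x))^(n-1) * (1-2*x)) / (1-2*z) := by
        rw [intervalIntegral.integral_div]
    _ = (z*(1-z))^n / n / (1-2*z) := by rw [hexact]
    _ = (z*(1-z))^n / (n * (1-2*z)) := by rw [div_div]

/-- The regularized incomplete beta function I_z(a,b). -/
noncomputable def regIncBeta (z a b : ℝ) : ℝ :=
  (∫ t in Set.Ioo 0 z, t ^ (a-1) * (1-t) ^ (b-1)) /
    (Real.Gamma a * Real.Gamma b / Real.Gamma (a+b))

theorem stmt_14 (n : ℕ) (hn : 1 ≤ n) (t : ℝ) (ht0 : 0 < t) (ht1 : t < 1) :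
    regIncBeta (t/(1+t)) (n:ℝ) (n:ℝ) ≤
      (1/(2 * Real.sqrt (Real.pi * n))) * ((1+t)/(1-t)) * (4*t/(1+t)^2)^n := by
  have h1t : (0:ℝ) < 1 + t := by linarith
  set z := t/(1+t) with hzdef
  have hz0 : 0 < z := div_pos ht0 h1t
  have hz : z < 1/2 := by
    rw [hzdef, div_lt_iff₀ h1t]; linarith
  have h2z : 1 - 2*z = (1-t)/(1+t) := by
    rw [hzdef]; field_simp; ring
  have h2zpos : 0 < 1 - 2*z := by rw [h2z]; exact div_pos (by linarith) h1t
  have hzz : z*(1-z) = t/(1+t)^2 := by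
    rw [hzdef]
    have h1 : (1 : ℝ) - t/(1+t) = 1/(1+t) := by field_simp; ring
    rw [h1, div_mul_div_comm, mul_one, ← sq]
  have hnR : (0:ℝ) < n := by exact_mod_cast hn
  -- rewrite the integral
  have hIeq : (∫ x in Set.Ioo 0 z, x ^ ((n:ℝ)-1) * (1-x) ^ ((n:ℝ)-1))
      = ∫ x in (0:ℝ)..z, x^(n-1) * (1-x)^(n-1) := by
    rw [intervalIntegral.integral_of_le hz0.le, MeasureTheory.integral_Ioc_eq_integral_Ioo]
    apply MeasureTheory.setIntegral_congr_fun measurableSet_Ioo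
    intro x hx
    obtain ⟨hx0, hxz⟩ := hx
    have he : (n:ℝ) - 1 = ((n-1 : ℕ) : ℝ) := by
      rw [Nat.cast_sub hn]; simp
    simp only [he, Real.rpow_natCast]
  -- Gamma values
  have hG : Real.Gamma (n:ℝ) = (n-1).factorial := by
    rw [show ((n:ℝ)) = ((n-1:ℕ):ℝ) + 1 by rw [Nat.cast_sub hn]; push_cast; ring]
    exact Real.Gamma_nat_eq_factorial _
  have hG2 : Real.Gamma ((n:ℝ)+(n:ℝ)) = (2*n-1).factorial := by
    rw [show ((n:ℝ)+(n:ℝ)) = ((2*n-1:ℕ):ℝ) + 1 by rw [Nat.cast_sub (by omega)]; push_cast; ring]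
    exact Real.Gamma_nat_eq_factorial _
  have hfpos : (0:ℝ) < ((n-1).factorial : ℝ) := by exact_mod_cast Nat.factorial_pos (n-1)
  have hgpos : (0:ℝ) < ((2*n-1).factorial : ℝ) := by exact_mod_cast Nat.factorial_pos (2*n-1)
  have hDpos : (0:ℝ) < ((n-1).factorial : ℝ) * ((n-1).factorial : ℝ) / ((2*n-1).factorial : ℝ) := by positivity
  rw [regIncBeta, hIeq, hG, hG2]
  have hIb := integral_bound n hn z hz0 hz
  have step1 : (∫ x in (0:ℝ)..z, x^(n-1) * (1-x)^(n-1)) / (((n-1).factorial:ℝ) * ((n-1).factorial:ℝ) / ((2*n-1).factorial:ℝ))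
      ≤ ((z*(1-z))^n / (n * (1-2*z))) / (((n-1).factorial:ℝ) * ((n-1).factorial:ℝ) / ((2*n-1).factorial:ℝ)) :=
    div_le_div_of_nonneg_right hIb hDpos.le
  refine le_trans step1 ?_
  -- key factorial identity
  set C : ℝ := (Nat.centralBinom n : ℝ) with hCdef
  have hCpos : (0:ℝ) < C := by rw [hCdef]; exact_mod_cast Nat.centralBinom_pos n
  have hCB : C * (((n).factorial : ℝ) * ((n).factorial : ℝ)) = ((2*n).factorial : ℝ) := by
    rw [hCdef]
    exact_mod_cast congrArg (Nat.cast (R := ℝ))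
      (by rw [Nat.centralBinom]
          have := Nat.choose_mul_factorial_mul_factorial (show n ≤ 2*n by omega)
          rwa [show 2*n - n = n by omega, mul_assoc] at this)
  have hn1 : ((n).factorial : ℝ) = (n:ℝ) * ((n-1).factorial : ℝ) := by
    exact_mod_cast (Nat.mul_factorial_pred (by omega)).symm
  have hn2 : ((2*n).factorial : ℝ) = (2*(n:ℝ)) * ((2*n-1).factorial : ℝ) := by
    have := (Nat.mul_factorial_pred (show 2*n ≠ 0 by omega)).symm
    exact_mod_cast congrArg (Nat.cast (R := ℝ)) this
  rw [hn1, hn2] at hCB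
  have hident : C * ((n:ℝ) * ((n-1).factorial:ℝ) * ((n-1).factorial:ℝ)) = 2 * ((2*n-1).factorial:ℝ) := by
    apply mul_left_cancel₀ hnR.ne'
    linear_combination hCB
  -- positivity of sqrt
  have hsq : (0:ℝ) < Real.sqrt (Real.pi * n) := Real.sqrt_pos.mpr (by positivity)
  have hcb := cb_bound n hn
  -- main comparison
  have hrhs : (1/(2 * Real.sqrt (Real.pi * n))) * ((1+t)/(1-t)) * (4*t/(1+t)^2)^n
      = ((z*(1-z))^n / (1-2*z)) * (4^n / (2 * Real.sqrt (Real.pi * n))) := by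
    rw [h2z, hzz]
    rw [show (4*t/(1+t)^2) = 4 * (t/(1+t)^2) by ring, mul_pow]
    rw [div_div_eq_mul_div]
    field_simp
  rw [hrhs]
  have hlhs : ((z*(1-z))^n / (n * (1-2*z))) / (((n-1).factorial:ℝ) * ((n-1).factorial:ℝ) / ((2*n-1).factorial:ℝ))
      = ((z*(1-z))^n / (1-2*z)) * (((2*n-1).factorial:ℝ) / ((n:ℝ) * ((n-1).factorial:ℝ) * ((n-1).factorial:ℝ))) := by
    have gen : ∀ (X N W F G : ℝ), N ≠ 0 → W ≠ 0 → F ≠ 0 → G ≠ 0 →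
        X/(N*W)/(F*F/G) = X/W * (G/(N*F*F)) := by
      intros X N W F G h1 h2 h3 h4; field_simp
    exact gen _ _ _ _ _ hnR.ne' h2zpos.ne' hfpos.ne' hgpos.ne'
  rw [hlhs]
  have hzpos : 0 < z*(1-z) := mul_pos hz0 (by linarith)
  apply mul_le_mul_of_nonneg_left _ (div_pos (pow_pos hzpos n) h2zpos).le
  -- (2n-1)!/(n (n-1).factorial²) = C/2 ≤ 4^n/(2√(πn))
  rw [div_le_div_iff₀ (by positivity) (by positivity)]
  -- (2n-1)! * (2√(πn)) ≤ 4^n * (n (n-1).factorial²)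
  calc ((2*n-1).factorial:ℝ) * (2 * Real.sqrt (Real.pi * n))
      = (C * Real.sqrt (Real.pi * n)) * ((n:ℝ) * ((n-1).factorial:ℝ) * ((n-1).factorial:ℝ)) := by
        linear_combination (-Real.sqrt (Real.pi * n)) * hident
    _ ≤ (4:ℝ)^n * ((n:ℝ) * ((n-1).factorial:ℝ) * ((n-1).factorial:ℝ)) := by
        rw [hCdef]
        exact mul_le_mul_of_nonneg_right hcb (by positivity)
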